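/- For a matroid M of rank r on E, the independent set polytope satisfies the signed Minkowski sum decomposition I_M = Σ_{A⊆E} β̃(M/A) D_{E−A}. -/

import Mathlib

open Finset
open scoped Pointwise Classical

/-- The 0/1 indicator vector of a finite set `B`. -/
def indic {α : Type*} [DecidableEq α] (B : Finset α) : α → ℝ :=
  fun a => if a ∈ B then 1 else 0

/-- The independent set polytope: convex hull of the indicator vectors of the
independent sets. -/
def indepPolytope {α : Type*} [DecidableEq α] (E : Finset α) (r : Finset α → ℕ) :
    Set (α → ℝ) :=
  convexHull ℝ {x | ∃ A : Finset α, A ⊆ E ∧ r A = A.card ∧ x = indic A}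

/-- `D_J = conv{0, e_i : i ∈ J}`. -/
def Dsimp {α : Type*} [DecidableEq α] (J : Finset α) : Set (α → ℝ) :=
  convexHull ℝ (insert 0 {x | ∃ i ∈ J, x = Pi.single i (1 : ℝ)})

/-- The beta invariant. -/
def betaInv {α : Type*} [DecidableEq α] (G : Finset α) (ρ : Finset α → ℕ) : ℤ :=
  (-1) ^ (ρ G) * ∑ X ∈ G.powerset, (-1) ^ X.card * (ρ X : ℤ)

/-- The signed beta invariant `β̃(M) = (−1)^{r(M)+1} β(M)`. -/
def betaT {α : Type*} [DecidableEq α] (G : Finset α) (ρ : Finset α → ℕ) : ℤ :=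
  (-1) ^ (ρ G + 1) * betaInv G ρ

/-- The rank function of the contraction `M/A`. -/
def contr {α : Type*} [DecidableEq α] (r : Finset α → ℕ) (A : Finset α) :
    Finset α → ℕ :=
  fun X => r (A ∪ X) - r A


/-!
Both sides are convex hulls of finite sets, so it suffices that every continuous linear functional
`f` attains the same maximum on their generating sets; maxima add under Minkowski sums and scale
under nonnegative dilations. With `w i = f (Pi.single i 1)`, write `w⁺ = ∑ μ_U 𝟙_U` over a chain of
level sets `U` of `w` (a layer cake). Then `f` attains `∑ μ_U [U meets J]` on `D_J`, and, by the
greedy algorithm, `∑ μ_U r(U)` on `I_M`. So everything reduces to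
`∑_{A ⊆ E} β̃(M/A) [U meets E \ A] = r(U)` for `U ⊆ E`, which is Möbius inversion on the Boolean
lattice, since `β̃(M/A) = -∑_{X ⊆ E \ A} (-1)^|X| r(A ∪ X)` whenever `A ≠ E`.
-/

section SupportValues

variable {V F : Type*} [AddCommMonoid V] [FunLike F V ℝ]

theorem isGreatest_image_add [AddHomClass F V ℝ] (f : F) {S T : Set V} {a b : ℝ}
    (hS : IsGreatest (f '' S) a) (hT : IsGreatest (f '' T) b) : IsGreatest (f '' (S + T)) (a + b) := by
  rw [Set.image_add, ← Set.image2_add]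
  exact hS.image2 (fun _ => add_left_mono) (fun _ => add_right_mono) hT

theorem isGreatest_image_smul [Module ℝ V] [LinearMapClass F ℝ V ℝ] (f : F) {S : Set V}
    {a c : ℝ} (hc : 0 ≤ c) (hS : IsGreatest (f '' S) a) : IsGreatest (f '' (c • S)) (c * a) := by
  rw [image_smul_set, ← Set.image_smul]
  exact (monotone_mul_left_of_nonneg hc).map_isGreatest hS

theorem isGreatest_image_sum [AddMonoidHomClass F V ℝ] (f : F) {ι : Type*} (s : Finset ι)
    {K : ι → Set V} {m : ι → ℝ} (hK : ∀ i ∈ s, IsGreatest (f '' K i) (m i)) :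
    IsGreatest (f '' ∑ i ∈ s, K i) (∑ i ∈ s, m i) := by
  induction s using Finset.cons_induction with
  | empty => simp
  | cons i s hi ih =>
    rw [sum_cons, sum_cons]
    exact isGreatest_image_add f (hK i (mem_cons_self i s))
      (ih fun j hj => hK j (mem_cons_of_mem hj))

end SupportValues

section SupportFunction

variable {V : Type*} [AddCommGroup V] [Module ℝ V] [TopologicalSpace V] [IsTopologicalAddGroup V]
  [ContinuousSMul ℝ V] [LocallyConvexSpace ℝ V] [T2Space V]

theorem convexHull_subset_convexHull_of_forall_exists_le {P Q : Set V} (hQ : Q.Finite)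
    (h : ∀ f : StrongDual ℝ V, ∀ x ∈ P, ∃ y ∈ Q, f x ≤ f y) : convexHull ℝ P ⊆ convexHull ℝ Q := by
  refine convexHull_min (fun x hx => ?_) (convex_convexHull ℝ Q)
  by_contra hxQ
  obtain ⟨f, u, hfQ, hfx⟩ :=
    geometric_hahn_banach_closed_point (convex_convexHull ℝ Q) (hQ.isClosed_convexHull (𝕜 := ℝ)) hxQ
  obtain ⟨y, hy, hxy⟩ := h f x hx
  exact (hfQ y (subset_convexHull ℝ Q hy)).not_ge (hfx.le.trans hxy)

theorem convexHull_eq_of_isGreatest_image {P Q : Set V} (hP : P.Finite) (hQ : Q.Finite)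
    (h : ∀ f : StrongDual ℝ V, ∃ m, IsGreatest (f '' P) m ∧ IsGreatest (f '' Q) m) :
    convexHull ℝ P = convexHull ℝ Q := by
  have key : ∀ {P Q : Set V}, Q.Finite →
      (∀ f : StrongDual ℝ V, ∃ m, IsGreatest (f '' P) m ∧ IsGreatest (f '' Q) m) →
      convexHull ℝ P ⊆ convexHull ℝ Q := fun hQ h =>
    convexHull_subset_convexHull_of_forall_exists_le hQ fun f x hx => by
      obtain ⟨m, hPm, ⟨y, hy, hym⟩, -⟩ := h f
      exact ⟨y, hy, hym ▸ hPm.2 ⟨x, hx, rfl⟩⟩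
  exact (key hQ h).antisymm (key hP fun f => (h f).imp fun _ => And.symm)

theorem convexHull_add_sum_neg_smul_eq_sum_nonneg_smul {ι : Type*} (s : Finset ι) (c : ι → ℝ)
    {P : Set V} {K : ι → Set V} (hP : P.Finite) (hK : ∀ i ∈ s, (K i).Finite)
    (hsupp : ∀ f : StrongDual ℝ V, ∃ (m₀ : ℝ) (m : ι → ℝ), IsGreatest (f '' P) m₀ ∧
      (∀ i ∈ s, IsGreatest (f '' K i) (m i)) ∧ m₀ = ∑ i ∈ s, c i * m i) :
    convexHull ℝ P + ∑ i ∈ s with c i < 0, (-c i) • convexHull ℝ (K i) =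
      ∑ i ∈ s with 0 ≤ c i, c i • convexHull ℝ (K i) := by
  simp_rw [← convexHull_smul, ← convexHull_sum, ← convexHull_add]
  have hfin : ∀ (t : Finset ι) (a : ι → ℝ), t ⊆ s → (∑ i ∈ t, a i • K i).Finite :=
    fun t a ht => sum_induction _ Set.Finite (fun _ _ => Set.Finite.add) Set.finite_zero
      fun i hi => (hK i (ht hi)).smul_set
  refine convexHull_eq_of_isGreatest_image (hP.add (hfin _ _ (filter_subset _ _)))
    (hfin _ _ (filter_subset _ _)) fun f => ?_
  obtain ⟨m₀, m, hP, hK, hm₀⟩ := hsupp f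
  have hsum : ∀ (t : Finset ι) (a : ι → ℝ), t ⊆ s → (∀ i ∈ t, 0 ≤ a i) →
      IsGreatest (f '' ∑ i ∈ t, a i • K i) (∑ i ∈ t, a i * m i) := fun t a ht ha =>
    isGreatest_image_sum f t fun i hi => isGreatest_image_smul f (ha i hi) (hK i (ht hi))
  refine ⟨∑ i ∈ s with 0 ≤ c i, c i * m i, ?_,
    hsum _ _ (filter_subset _ _) fun i hi => (mem_filter.1 hi).2⟩
  convert isGreatest_image_add f hP (hsum {i ∈ s | c i < 0} (fun i => -c i) (filter_subset _ _)
    fun i hi => neg_nonneg.2 (mem_filter.1 hi).2.le) using 1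
  rw [hm₀, ← sum_filter_add_sum_filter_not s (fun i => 0 ≤ c i)]
  simp [not_le]

end SupportFunction

theorem IsChain.finset_subset_of_card_le {α : Type*} {C : Set (Finset α)} (hC : IsChain (· ⊆ ·) C)
    {U V : Finset α} (hU : U ∈ C) (hV : V ∈ C) (hUV : #U ≤ #V) : U ⊆ V := by
  rcases hC.total hU hV with h | h
  · exact h
  · exact (eq_of_subset_of_card_le h hUV).ge

section

variable {α : Type*} [DecidableEq α]

structure IsRankFn (r : Finset α → ℕ) : Prop where
  le_card : ∀ A, r A ≤ #A
  mono : Monotone r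
  submod : ∀ A B, r (A ∪ B) + r (A ∩ B) ≤ r A + r B

namespace IsRankFn

variable {r : Finset α → ℕ}

theorem rank_empty (hr : IsRankFn r) : r ∅ = 0 :=
  Nat.le_zero.1 (hr.le_card ∅)

theorem rank_insert_le (hr : IsRankFn r) (a : α) (X : Finset α) : r (insert a X) ≤ r X + 1 := by
  have h := hr.submod X {a}
  have ha : r {a} ≤ 1 := hr.le_card {a}
  rw [← union_singleton]
  omega

theorem indep_of_subset (hr : IsRankFn r) {A B : Finset α} (hA : r A = #A) (hBA : B ⊆ A) :
    r B = #B := by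
  have h := hr.submod B (A \ B)
  rw [union_sdiff_of_subset hBA] at h
  have := hr.le_card (A \ B)
  have := card_sdiff_add_card_eq_card hBA
  have := hr.le_card B
  omega

theorem rank_union_eq_of_forall_rank_insert_eq (hr : IsRankFn r) {X Z : Finset α}
    (hZ : ∀ z ∈ Z, r (insert z X) = r X) : r (X ∪ Z) = r X := by
  induction Z using Finset.induction_on with
  | empty => simp
  | @insert a Z _ ih =>
    have hXZ := ih fun z hz => hZ z (mem_insert_of_mem hz)
    have h := hr.submod (X ∪ Z) (insert a X)
    have hunion : X ∪ Z ∪ insert a X = X ∪ insert a Z := by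
      ext; simp only [mem_union, mem_insert]; tauto
    have hinter : r X ≤ r ((X ∪ Z) ∩ insert a X) :=
      hr.mono (subset_inter subset_union_left (subset_insert a X))
    have hle : r X ≤ r (X ∪ insert a Z) := hr.mono subset_union_left
    rw [hunion, hXZ, hZ a (mem_insert_self a Z)] at h
    omega

theorem exists_indep_superset_rank_eq (hr : IsRankFn r) {I X : Finset α} (hIX : I ⊆ X)
    (hI : r I = #I) : ∃ J, I ⊆ J ∧ J ⊆ X ∧ r J = #J ∧ r J = r X := by
  obtain ⟨J, hJmem, hJmax⟩ := exists_max_image {J ∈ X.powerset | I ⊆ J ∧ r J = #J} card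
    ⟨I, mem_filter.2 ⟨mem_powerset.2 hIX, subset_rfl, hI⟩⟩
  simp only [mem_filter, mem_powerset] at hJmem hJmax
  obtain ⟨hJX, hIJ, hJ⟩ := hJmem
  refine ⟨J, hIJ, hJX, hJ, ?_⟩
  have hclosed : ∀ x ∈ X, r (insert x J) = r J := by
    intro x hx
    by_cases hxJ : x ∈ J
    · rw [insert_eq_of_mem hxJ]
    have hcard : #(insert x J) = #J + 1 := card_insert_of_notMem hxJ
    have hle : r (insert x J) ≤ #J := by
      by_contra hlt
      have hind : r (insert x J) = #(insert x J) := by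
        have := hr.rank_insert_le x J
        have := hr.le_card (insert x J)
        omega
      have := hJmax _ ⟨insert_subset hx hJX, hIJ.trans (subset_insert x J), hind⟩
      omega
    exact le_antisymm (hJ ▸ hle) (hr.mono (subset_insert x J))
  rw [← hr.rank_union_eq_of_forall_rank_insert_eq hclosed, union_eq_right.2 hJX]

theorem exists_indep_card_inter_eq_of_isChain (hr : IsRankFn r) {C : Finset (Finset α)}
    (hC : IsChain (· ⊆ ·) (C : Set (Finset α))) :
    ∃ I, r I = #I ∧ (∀ i ∈ I, ∃ U ∈ C, i ∈ U) ∧ ∀ U ∈ C, #(I ∩ U) = r U := by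
  induction C using Finset.induction_on_max_value (card : Finset α → ℕ) with
  | empty => exact ⟨∅, hr.rank_empty, by simp, by simp⟩
  | insert V C hVC hmax ih =>
    rw [coe_insert] at hC
    have hCV : ∀ U ∈ C, U ⊆ V := fun U hU =>
      hC.finset_subset_of_card_le (Set.mem_insert_of_mem _ hU) (Set.mem_insert V _) (hmax U hU)
    obtain ⟨I, hI, hIC, hIcard⟩ := ih (hC.mono (Set.subset_insert _ _))
    have hIV : I ⊆ V := fun i hi =>
      let ⟨U, hU, hiU⟩ := hIC i hi
      hCV U hU hiU
    obtain ⟨J, hIJ, hJV, hJ, hJrank⟩ := hr.exists_indep_superset_rank_eq hIV hI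
    refine ⟨J, hJ, fun i hi => ⟨V, mem_insert_self V C, hJV hi⟩, ?_⟩
    simp only [mem_insert, forall_eq_or_imp]
    refine ⟨by rw [inter_eq_left.2 hJV, ← hJ, hJrank], fun U hU => le_antisymm ?_ ?_⟩
    · rw [← hr.indep_of_subset hJ inter_subset_left]
      exact hr.mono inter_subset_right
    · rw [← hIcard U hU]
      exact card_le_card (inter_subset_inter_right hIJ)

end IsRankFn

structure IsLayerCake (E : Finset α) (w : α → ℝ) (C : Finset (Finset α)) (μ : Finset α → ℝ) :
    Prop where
  isChain : IsChain (· ⊆ ·) (C : Set (Finset α))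
  subset_pos : ∀ U ∈ C, U ⊆ {i ∈ E | 0 < w i}
  nonneg : ∀ U ∈ C, 0 ≤ μ U
  posPart_eq : ∀ i ∈ E, (w i)⁺ = ∑ U ∈ C with i ∈ U, μ U

theorem exists_isLayerCake (E : Finset α) (w : α → ℝ) : ∃ C μ, IsLayerCake E w C μ := by
  induction hn : #{i ∈ E | 0 < w i} using Nat.strong_induction_on generalizing w with
  | _ n ih =>
    set P := {i ∈ E | 0 < w i}
    rcases P.eq_empty_or_nonempty with hP | hP
    · refine ⟨∅, 0, ⟨by simp, by simp, by simp, fun i hi => ?_⟩⟩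
      have : ¬ 0 < w i := fun hpos => (eq_empty_iff_forall_notMem.1 hP) i (mem_filter.2 ⟨hi, hpos⟩)
      simpa using not_lt.1 this
    obtain ⟨i₀, hi₀, hmin⟩ := P.exists_min_image w hP
    have hm : 0 < w i₀ := (mem_filter.1 hi₀).2
    -- lower every positive weight by the least one; the top layer `P` carries the difference
    set w' : α → ℝ := fun i => if i ∈ P then w i - w i₀ else w i
    have hP' : {i ∈ E | 0 < w' i} ⊆ P.erase i₀ := by
      intro i hi
      simp only [mem_filter, w'] at hi
      split_ifs at hi with hiP
      · exact mem_erase.2 ⟨fun h => by simp [h] at hi, hiP⟩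
      · exact absurd (mem_filter.2 hi) hiP
    obtain ⟨C, μ, hC⟩ := ih _ (hn ▸ (card_le_card hP').trans_lt (card_erase_lt_of_mem hi₀)) w' rfl
    have hCP : ∀ U ∈ C, U ⊆ P.erase i₀ := fun U hU => (hC.subset_pos U hU).trans hP'
    have hPC : P ∉ C := fun h => notMem_erase i₀ P (hCP P h hi₀)
    refine ⟨insert P C, fun U => if U = P then w i₀ else μ U, ⟨?_, ?_, ?_, fun i hi => ?_⟩⟩
    · rw [coe_insert]
      exact hC.isChain.insert fun U hU _ => Or.inr ((hCP U hU).trans (erase_subset i₀ P))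
    · simp only [mem_insert, forall_eq_or_imp]
      exact ⟨subset_rfl, fun U hU => (hCP U hU).trans (erase_subset i₀ P)⟩
    · simp only [mem_insert, forall_eq_or_imp, if_pos]
      exact ⟨hm.le, fun U hU => by rw [if_neg (ne_of_mem_of_not_mem hU hPC)]; exact hC.nonneg U hU⟩
    have hsumC : ∑ U ∈ C with i ∈ U, (if U = P then w i₀ else μ U) = (w' i)⁺ := by
      rw [hC.posPart_eq i hi]
      exact sum_congr rfl fun U hU => if_neg (ne_of_mem_of_not_mem (mem_filter.1 hU).1 hPC)
    rw [filter_insert]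
    by_cases hiP : i ∈ P
    · have hle : w i₀ ≤ w i := hmin i hiP
      rw [if_pos hiP, sum_insert (fun h => hPC (mem_filter.1 h).1), if_pos rfl, hsumC]
      simp only [w', if_pos hiP, posPart_eq_self.2 (sub_nonneg.2 hle),
        posPart_eq_self.2 (hm.trans_le hle).le]
      ring
    · rw [if_neg hiP, hsumC]
      simp only [w', if_neg hiP]

namespace IsLayerCake

variable {E : Finset α} {w : α → ℝ} {C : Finset (Finset α)} {μ : Finset α → ℝ}

theorem isGreatest_insert_zero_image (hC : IsLayerCake E w C μ) {J : Finset α} (hJ : J ⊆ E) :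
    IsGreatest (insert 0 (w '' J)) (∑ U ∈ C with ¬Disjoint J U, μ U) := by
  constructor
  · rcases ({U ∈ C | ¬Disjoint J U}).eq_empty_or_nonempty with hD | hD
    · rw [hD, sum_empty]
      exact Set.mem_insert _ _
    obtain ⟨U₀, hU₀, hU₀min⟩ := exists_min_image _ card hD
    obtain ⟨hU₀C, hJU₀⟩ := mem_filter.1 hU₀
    obtain ⟨i, hiJ, hiU₀⟩ := not_disjoint_iff.1 hJU₀
    -- the smallest layer meeting `J` lies inside every layer meeting `J`
    have hlayers : {U ∈ C | ¬Disjoint J U} = {U ∈ C | i ∈ U} := by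
      ext U
      simp only [mem_filter, and_congr_right_iff]
      refine fun hU => ⟨fun hJU => ?_, fun hiU => not_disjoint_iff.2 ⟨i, hiJ, hiU⟩⟩
      exact hC.isChain.finset_subset_of_card_le hU₀C hU (hU₀min U (mem_filter.2 ⟨hU, hJU⟩)) hiU₀
    have hpos : 0 < w i := (mem_filter.1 (hC.subset_pos U₀ hU₀C hiU₀)).2
    rw [hlayers, ← hC.posPart_eq i (hJ hiJ), posPart_eq_self.2 hpos.le]
    exact Set.mem_insert_of_mem _ ⟨i, hiJ, rfl⟩
  · rintro _ (rfl | ⟨j, hj, rfl⟩)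
    · exact sum_nonneg fun U hU => hC.nonneg U (mem_filter.1 hU).1
    calc w j ≤ (w j)⁺ := le_posPart _
      _ = ∑ U ∈ C with j ∈ U, μ U := hC.posPart_eq j (hJ hj)
      _ ≤ ∑ U ∈ C with ¬Disjoint J U, μ U := by
        refine sum_le_sum_of_subset_of_nonneg (fun U => ?_)
          fun U hU _ => hC.nonneg U (mem_filter.1 hU).1
        simp only [mem_filter]
        exact fun ⟨hU, hjU⟩ => ⟨hU, not_disjoint_iff.2 ⟨j, hj, hjU⟩⟩

theorem sum_posPart_eq (hC : IsLayerCake E w C μ) {A : Finset α} (hA : A ⊆ E) :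
    ∑ i ∈ A, (w i)⁺ = ∑ U ∈ C, μ U * #(A ∩ U) := by
  rw [sum_congr rfl fun i hi => hC.posPart_eq i (hA hi)]
  simp_rw [sum_filter]
  rw [sum_comm]
  simp [sum_ite_mem, mul_comm]

theorem isGreatest_sum_indep {r : Finset α → ℕ} (hr : IsRankFn r) (hC : IsLayerCake E w C μ) :
    IsGreatest ((fun A => ∑ i ∈ A, w i) '' {A | A ⊆ E ∧ r A = #A}) (∑ U ∈ C, μ U * r U) := by
  constructor
  · obtain ⟨I, hI, hIC, hIcard⟩ := hr.exists_indep_card_inter_eq_of_isChain hC.isChain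
    have hIpos : ∀ i ∈ I, i ∈ E ∧ 0 < w i := fun i hi =>
      let ⟨U, hU, hiU⟩ := hIC i hi
      mem_filter.1 (hC.subset_pos U hU hiU)
    have hIE : I ⊆ E := fun i hi => (hIpos i hi).1
    refine ⟨I, ⟨hIE, hI⟩, ?_⟩
    calc ∑ i ∈ I, w i = ∑ i ∈ I, (w i)⁺ :=
          sum_congr rfl fun i hi => (posPart_eq_self.2 (hIpos i hi).2.le).symm
      _ = ∑ U ∈ C, μ U * #(I ∩ U) := hC.sum_posPart_eq hIE
      _ = ∑ U ∈ C, μ U * r U := sum_congr rfl fun U hU => by rw [hIcard U hU]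
  · rintro _ ⟨A, ⟨hAE, hA⟩, rfl⟩
    have hrank : ∀ U, (#(A ∩ U) : ℝ) ≤ r U := fun U => by
      rw [← hr.indep_of_subset hA inter_subset_left]
      exact_mod_cast hr.mono inter_subset_right
    calc ∑ i ∈ A, w i ≤ ∑ i ∈ A, (w i)⁺ := sum_le_sum fun i _ => le_posPart _
      _ = ∑ U ∈ C, μ U * #(A ∩ U) := hC.sum_posPart_eq hAE
      _ ≤ ∑ U ∈ C, μ U * r U :=
          sum_le_sum fun U hU => mul_le_mul_of_nonneg_left (hrank U) (hC.nonneg U hU)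

end IsLayerCake

theorem sum_powerset_sum_neg_one_pow_mul_union (g : Finset α → ℤ) {T E : Finset α} (hT : T ⊆ E) :
    ∑ A ∈ E.powerset with T ⊆ A, ∑ X ∈ (E \ A).powerset, (-1) ^ #X * g (A ∪ X) = g T := by
  rw [sum_sigma']
  calc _ = ∑ p ∈ {B ∈ E.powerset | T ⊆ B}.sigma fun B => (B \ T).powerset, (-1) ^ #p.2 * g p.1 := by
        refine sum_nbij' (fun p => ⟨p.1 ∪ p.2, p.2⟩) (fun p => ⟨p.1 \ p.2, p.2⟩) ?_ ?_ ?_ ?_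
          fun _ _ => rfl
        all_goals
          rintro ⟨A, X⟩ h
          simp only [mem_sigma, mem_filter, mem_powerset, subset_sdiff] at h ⊢
        · obtain ⟨⟨hAE, hTA⟩, hXE, hXA⟩ := h
          exact ⟨⟨union_subset hAE hXE, hTA.trans subset_union_left⟩, subset_union_right,
            hXA.mono_right hTA⟩
        · obtain ⟨⟨hAE, hTA⟩, hXA, hXT⟩ := h
          exact ⟨⟨sdiff_subset.trans hAE, hTA, hXT.symm⟩, hXA.trans hAE, disjoint_sdiff⟩
        · rw [union_sdiff_cancel_right h.2.2.symm]
        · rw [sdiff_union_of_subset h.2.1]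
    _ = ∑ B ∈ E.powerset with T ⊆ B, g B * ∑ X ∈ (B \ T).powerset, (-1) ^ #X := by
        rw [sum_sigma]
        simp only [mul_sum, mul_comm]
    _ = g T := by
        simp only [sum_powerset_neg_one_pow_card, sdiff_eq_empty_iff_subset, mul_ite, mul_one,
          mul_zero, sum_filter, ← ite_and, ← subset_antisymm_iff]
        rw [sum_ite_eq, if_pos (mem_powerset.2 hT)]

theorem betaT_eq_neg_sum (G : Finset α) (ρ : Finset α → ℕ) :
    betaT G ρ = -∑ X ∈ G.powerset, (-1) ^ #X * (ρ X : ℤ) := by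
  rw [betaT, betaInv, ← mul_assoc, ← pow_add, show ρ G + 1 + ρ G = 2 * ρ G + 1 by ring, pow_succ,
    pow_mul]
  simp

theorem betaT_contr {r : Finset α → ℕ} (hmono : Monotone r) (A : Finset α) {G : Finset α}
    (hG : G.Nonempty) : betaT G (contr r A) = -∑ X ∈ G.powerset, (-1) ^ #X * (r (A ∪ X) : ℤ) := by
  have hcast : ∀ X, (contr r A X : ℤ) = r (A ∪ X) - r A := fun X =>
    Nat.cast_sub (hmono subset_union_left)
  simp only [betaT_eq_neg_sum, hcast, mul_sub, sum_sub_distrib, ← sum_mul,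
    sum_powerset_neg_one_pow_card_of_nonempty hG, zero_mul, sub_zero]

theorem sum_betaT_contr_of_not_disjoint {r : Finset α → ℕ} (h0 : r ∅ = 0) (hmono : Monotone r)
    {E U : Finset α} (hU : U ⊆ E) :
    ∑ A ∈ E.powerset with ¬Disjoint (E \ A) U, betaT (E \ A) (contr r A) = r U := by
  set F : Finset α → ℤ := fun A => ∑ X ∈ (E \ A).powerset, (-1) ^ #X * (r (A ∪ X) : ℤ)
  have hβ : ∀ A ∈ {A ∈ E.powerset | ¬Disjoint (E \ A) U}, betaT (E \ A) (contr r A) = -F A :=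
    fun A hA => betaT_contr hmono A
      ((not_disjoint_iff_nonempty_inter.1 (mem_filter.1 hA).2).mono inter_subset_left)
  have hdisj : {A ∈ E.powerset | Disjoint (E \ A) U} = {A ∈ E.powerset | U ⊆ A} :=
    filter_congr fun A hA => by rw [disjoint_comm, disjoint_sdiff_iff_le hU (mem_powerset.1 hA)]
  have hsplit := sum_filter_add_sum_filter_not E.powerset (fun A => Disjoint (E \ A) U) F
  have hall : ∑ A ∈ E.powerset, F A = 0 := by
    simpa [h0] using sum_powerset_sum_neg_one_pow_mul_union (fun B => (r B : ℤ)) (empty_subset E)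
  have hU' := sum_powerset_sum_neg_one_pow_mul_union (fun B => (r B : ℤ)) hU
  rw [hdisj] at hsplit
  rw [sum_congr rfl hβ, sum_neg_distrib]
  linarith

theorem sum_mul_rank_eq_sum_betaT_mul {r : Finset α → ℕ} (h0 : r ∅ = 0) (hmono : Monotone r)
    {E : Finset α} {C : Finset (Finset α)} (hC : ∀ U ∈ C, U ⊆ E) (μ : Finset α → ℝ) :
    ∑ U ∈ C, μ U * r U = ∑ A ∈ E.powerset,
      (betaT (E \ A) (contr r A) : ℝ) * ∑ U ∈ C with ¬Disjoint (E \ A) U, μ U := by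
  simp only [sum_filter, mul_sum, mul_ite, mul_zero]
  rw [sum_comm]
  refine sum_congr rfl fun U hU => ?_
  have hrank := congrArg (Int.cast : ℤ → ℝ) (sum_betaT_contr_of_not_disjoint h0 hmono (hC U hU))
  push_cast at hrank
  rw [← sum_filter, ← sum_mul, hrank, mul_comm]

section Coordinates

variable {F : Type*} [FunLike F (α → ℝ) ℝ] [AddMonoidHomClass F (α → ℝ) ℝ]
  {E : Finset α} {C : Finset (Finset α)} {μ : Finset α → ℝ}

theorem indic_eq_sum_single (A : Finset α) : indic A = ∑ i ∈ A, Pi.single i (1 : ℝ) := by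
  ext a
  simp [indic, Finset.sum_apply, Pi.single_apply]

theorem isGreatest_image_setOf_indic_indep {r : Finset α → ℕ} (hr : IsRankFn r) (f : F)
    (hC : IsLayerCake E (fun i => f (Pi.single i 1)) C μ) :
    IsGreatest (f '' {x | ∃ A : Finset α, A ⊆ E ∧ r A = #A ∧ x = indic A})
      (∑ U ∈ C, μ U * r U) := by
  convert hC.isGreatest_sum_indep hr using 1
  ext t
  simp [indic_eq_sum_single, map_sum]

theorem isGreatest_image_insert_zero_setOf_single (f : F)
    (hC : IsLayerCake E (fun i => f (Pi.single i 1)) C μ) {J : Finset α} (hJ : J ⊆ E) :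
    IsGreatest (f '' insert 0 {x | ∃ i ∈ J, x = Pi.single i (1 : ℝ)})
      (∑ U ∈ C with ¬Disjoint J U, μ U) := by
  convert hC.isGreatest_insert_zero_image hJ using 1
  ext t
  simp [eq_comm]

end Coordinates

end

theorem indepPolytope_signed_sum_general {α : Type*} [DecidableEq α]
    (E : Finset α) (r : Finset α → ℕ)
    (hcard : ∀ A, r A ≤ A.card)
    (hmono : ∀ A B, A ⊆ B → r A ≤ r B)
    (hsub : ∀ A B, r (A ∪ B) + r (A ∩ B) ≤ r A + r B) :
    indepPolytope E r +
        ∑ A ∈ E.powerset.filter (fun A => betaT (E \ A) (contr r A) < 0),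
          (-(betaT (E \ A) (contr r A) : ℝ)) • Dsimp (E \ A)
      = ∑ A ∈ E.powerset.filter (fun A => 0 ≤ betaT (E \ A) (contr r A)),
          ((betaT (E \ A) (contr r A) : ℝ)) • Dsimp (E \ A) := by
  have hr : IsRankFn r := ⟨hcard, fun A B => hmono A B, hsub⟩
  have hfinI : {x | ∃ A, A ⊆ E ∧ r A = #A ∧ x = indic A}.Finite :=
    (E.powerset.finite_toSet.image indic).subset fun _ ⟨A, hA, _, hx⟩ =>
      ⟨A, mem_powerset.2 hA, hx.symm⟩
  have hfinD : ∀ J : Finset α, (insert 0 {x | ∃ i ∈ J, x = Pi.single i (1 : ℝ)}).Finite :=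
    fun J => ((J.finite_toSet.image fun i => Pi.single i (1 : ℝ)).subset
      (by rintro _ ⟨i, hi, rfl⟩; exact ⟨i, hi, rfl⟩)).insert 0
  have key := convexHull_add_sum_neg_smul_eq_sum_nonneg_smul E.powerset
    (fun A => (betaT (E \ A) (contr r A) : ℝ)) hfinI (fun A _ => hfinD (E \ A)) fun f => by
      obtain ⟨C, μ, hC⟩ := exists_isLayerCake E fun i => f (Pi.single i 1)
      exact ⟨_, _, isGreatest_image_setOf_indic_indep hr f hC,
        fun A _ => isGreatest_image_insert_zero_setOf_single f hC sdiff_subset,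
        sum_mul_rank_eq_sum_betaT_mul hr.rank_empty hr.mono
          (fun U hU => (hC.subset_pos U hU).trans (filter_subset _ _)) μ⟩
  convert key using 4 <;> simp [indepPolytope, Dsimp]

/-- Theorem 4.4: `I_M = ∑_{A⊆E} β̃(M/A) D_{E−A}` as a signed Minkowski sum, i.e.
`I_M + ∑_{β̃(M/A)<0} (−β̃(M/A)) D_{E−A} = ∑_{β̃(M/A)≥0} β̃(M/A) D_{E−A}`. -/
theorem indepPolytope_signed_sum {α : Type*} [DecidableEq α]
    (E : Finset α) (r : Finset α → ℕ)
    (hcard : ∀ A, r A ≤ A.card)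
    (hmono : ∀ A B, A ⊆ B → r A ≤ r B)
    (hsub : ∀ A B, r (A ∪ B) + r (A ∩ B) ≤ r A + r B)
    (hE : ∀ A, r (A ∩ E) = r A) :
    indepPolytope E r +
        ∑ A ∈ E.powerset.filter (fun A => betaT (E \ A) (contr r A) < 0),
          (-(betaT (E \ A) (contr r A) : ℝ)) • Dsimp (E \ A)
      = ∑ A ∈ E.powerset.filter (fun A => 0 ≤ betaT (E \ A) (contr r A)),
          ((betaT (E \ A) (contr r A) : ℝ)) • Dsimp (E \ A) :=
  indepPolytope_signed_sum_general E r hcard hmono hsub
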